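/- Suppose A = U Σ Vᵀ is a singular value decomposition with rank k, (A, b) satisfies the discrete Picard condition with parameter p > 1, and w* = Σ_{j=1}^k σ_j⁻¹ v_j (u_jᵀ b). Let (v̂_1,…,v̂_d) be the columns of an orthogonal d×d real matrix V̂ and σ̂₁ ≥ … ≥ σ̂_d ≥ 0. Define ε = min( k·σ₁^{p−1}, Σ_{j=1}^k ‖σ_j^{p−1} v_j − σ̂_j^{p−1} v̂_j‖₂ + σ̂_r^{p−1} − σ_r^{p−1} ). Then ‖Σ_{i=r+1}^d v̂_i (v̂_iᵀ w*)‖₂ ≤ (d − r)·σ_r^{p−1} + (d − r)·ε. -/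

import Mathlib

open Matrix Finset

/-- The Euclidean (ℓ2) norm on `ℝ^d`. -/
noncomputable def l2enorm {d : ℕ} (x : Fin d → ℝ) : ℝ :=
  Real.sqrt (∑ i, x i ^ 2)

lemma l2enorm_eq_norm {d : ℕ} (x : Fin d → ℝ) :
    l2enorm x = ‖(WithLp.equiv 2 (Fin d → ℝ)).symm x‖ := by
  rw [EuclideanSpace.norm_eq]
  unfold l2enorm
  congr 1
  apply Finset.sum_congr rfl
  intro i _
  rw [Real.norm_eq_abs, sq_abs]
  simp

lemma l2enorm_nonneg' {d : ℕ} (x : Fin d → ℝ) : 0 ≤ l2enorm x := Real.sqrt_nonneg _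

lemma l2enorm_smul {d : ℕ} (c : ℝ) (x : Fin d → ℝ) : l2enorm (c • x) = |c| * l2enorm x := by
  rw [l2enorm_eq_norm, l2enorm_eq_norm, ← Real.norm_eq_abs]
  rw [show (WithLp.equiv 2 (Fin d → ℝ)).symm (c • x)
      = c • (WithLp.equiv 2 (Fin d → ℝ)).symm x from rfl]
  exact norm_smul c _

lemma l2enorm_sum_le {d : ℕ} {ι : Type*} (s : Finset ι) (f : ι → (Fin d → ℝ)) :
    l2enorm (∑ i ∈ s, f i) ≤ ∑ i ∈ s, l2enorm (f i) := by
  rw [l2enorm_eq_norm]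
  rw [show (WithLp.equiv 2 (Fin d → ℝ)).symm (∑ i ∈ s, f i)
      = ∑ i ∈ s, (WithLp.equiv 2 (Fin d → ℝ)).symm (f i) from
        map_sum (WithLp.addEquiv 2 (Fin d → ℝ)).symm f s]
  refine (norm_sum_le s _).trans ?_
  exact Finset.sum_le_sum fun i _ => le_of_eq (l2enorm_eq_norm (f i)).symm

lemma abs_dot_le {d : ℕ} (x y : Fin d → ℝ) : |x ⬝ᵥ y| ≤ l2enorm x * l2enorm y := by
  have h := abs_real_inner_le_norm ((WithLp.equiv 2 (Fin d → ℝ)).symm x)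
    ((WithLp.equiv 2 (Fin d → ℝ)).symm y)
  rw [← l2enorm_eq_norm, ← l2enorm_eq_norm] at h
  rw [PiLp.inner_apply] at h
  simpa [RCLike.inner_apply, dotProduct, mul_comm] using h

lemma card_filter_lt' (d k : ℕ) (hk : k ≤ d) :
    (Finset.univ.filter (fun j : Fin d => (j : ℕ) < k)).card = k := by
  rw [Finset.card_filter]
  rw [Fin.sum_univ_eq_sum_range (fun j => if j < k then 1 else 0)]
  rw [← Finset.card_filter]
  rw [Finset.range_eq_Ico, Finset.Ico_filter_lt_of_le_right hk]
  simp

lemma card_filter_ge' (d r : ℕ) (hr : r ≤ d) :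
    (Finset.univ.filter (fun i : Fin d => r ≤ (i : ℕ))).card = d - r := by
  have h : (Finset.univ.filter (fun i : Fin d => r ≤ (i : ℕ)))
      = (Finset.univ.filter (fun i : Fin d => (i : ℕ) < r))ᶜ := by
    ext i; simp [not_lt]
  rw [h, Finset.card_compl, card_filter_lt' d r hr, Fintype.card_fin]

lemma dot_sum' {d : ℕ} {ι : Type*} (s : Finset ι) (x : Fin d → ℝ) (f : ι → Fin d → ℝ) :
    x ⬝ᵥ (∑ i ∈ s, f i) = ∑ i ∈ s, x ⬝ᵥ f i := by
  simp only [dotProduct, Finset.sum_apply, Finset.mul_sum]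
  rw [Finset.sum_comm]

/-- Under the discrete Picard condition with parameter `p > 1`,
with `w* = ∑_{j=1}^k σ_j⁻¹ v_j (u_jᵀ b)`, `(v̂_1,…,v̂_d)` the columns of an
orthogonal matrix `V̂`, `σ̂₁ ≥ … ≥ σ̂_d ≥ 0`, and
`ε = min(k σ₁^{p−1}, ∑_{j=1}^k ‖σ_j^{p−1} v_j − σ̂_j^{p−1} v̂_j‖₂ + σ̂_r^{p−1} − σ_r^{p−1})`,
we have `‖∑_{i=r+1}^d v̂_i (v̂_iᵀ w*)‖₂ ≤ (d − r) σ_r^{p−1} + (d − r) ε`. -/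
theorem projection_norm_le_bias_plus_eps
    (d r : ℕ) (hd : 1 ≤ d) (hr1 : 1 ≤ r) (hrd : r ≤ d)
    (U V : Matrix (Fin d) (Fin d) ℝ)
    (hU : Uᵀ * U = 1 ∧ U * Uᵀ = 1)
    (hV : Vᵀ * V = 1 ∧ V * Vᵀ = 1)
    (σ : Fin d → ℝ)
    (hσanti : ∀ i j : Fin d, i ≤ j → σ j ≤ σ i)
    (hσnonneg : ∀ i : Fin d, 0 ≤ σ i)
    (A : Matrix (Fin d) (Fin d) ℝ)
    (hA : A = U * Matrix.diagonal σ * Vᵀ)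
    (k : ℕ) (hkd : k ≤ d)
    (hrank : ∀ i : Fin d, (0 < σ i ↔ (i : ℕ) < k))
    (b : Fin d → ℝ) (p : ℝ) (hp : 1 < p)
    -- the discrete Picard condition: |u_iᵀ b| ≤ σ_i^p for i = 1,…,k and
    -- |u_iᵀ b| ≤ σ_k^p for i = k+1,…,d
    (hPicard₁ : ∀ i : Fin d, (i : ℕ) < k → |(fun l => U l i) ⬝ᵥ b| ≤ σ i ^ p)
    (hPicard₂ : ∀ i j : Fin d, k ≤ (i : ℕ) → (j : ℕ) + 1 = k →
      |(fun l => U l i) ⬝ᵥ b| ≤ σ j ^ p)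
    (wstar : Fin d → ℝ)
    (hwstar : wstar = ∑ j ∈ Finset.univ.filter (fun j : Fin d => (j : ℕ) < k),
      ((σ j)⁻¹ * ((fun l => U l j) ⬝ᵥ b)) • (fun l => V l j))
    (Vhat : Matrix (Fin d) (Fin d) ℝ)
    (hVhat : Vhatᵀ * Vhat = 1 ∧ Vhat * Vhatᵀ = 1)
    (σhat : Fin d → ℝ)
    (hσhatanti : ∀ i j : Fin d, i ≤ j → σhat j ≤ σhat i)
    (hσhatnonneg : ∀ i : Fin d, 0 ≤ σhat i)
    (ε : ℝ)
    (hε : ε = min ((k : ℝ) * σ ⟨0, by omega⟩ ^ (p - 1))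
      ((∑ j ∈ Finset.univ.filter (fun j : Fin d => (j : ℕ) < k),
          l2enorm ((σ j ^ (p - 1)) • (fun l => V l j) -
                 (σhat j ^ (p - 1)) • (fun l => Vhat l j))) +
        σhat ⟨r - 1, by omega⟩ ^ (p - 1) - σ ⟨r - 1, by omega⟩ ^ (p - 1))) :
    l2enorm (∑ i ∈ Finset.univ.filter (fun i : Fin d => r ≤ (i : ℕ)),
        ((fun l => Vhat l i) ⬝ᵥ wstar) • (fun l => Vhat l i)) ≤
      ((d : ℝ) - (r : ℝ)) * σ ⟨r - 1, by omega⟩ ^ (p - 1) +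
        ((d : ℝ) - (r : ℝ)) * ε := by
  obtain ⟨hV1, _⟩ := hV
  obtain ⟨hVh1, _⟩ := hVhat
  have hpm : (0:ℝ) ≤ p - 1 := by linarith
  set i0 : Fin d := ⟨0, by omega⟩ with hi0
  set ir : Fin d := ⟨r - 1, by omega⟩ with hir
  set t : Finset (Fin d) := Finset.univ.filter (fun j : Fin d => (j : ℕ) < k) with ht
  set s : Finset (Fin d) := Finset.univ.filter (fun i : Fin d => r ≤ (i : ℕ)) with hs
  set σr : ℝ := σ ir ^ (p - 1) with hσrdef
  -- column dot products
  have hVdot : ∀ i j : Fin d, (fun l => V l i) ⬝ᵥ (fun l => V l j) = if i = j then 1 else 0 := by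
    intro i j
    have := congrFun (congrFun hV1 i) j
    rw [Matrix.mul_apply, Matrix.one_apply] at this
    simpa [dotProduct, Matrix.transpose_apply] using this
  have hVhdot : ∀ i j : Fin d,
      (fun l => Vhat l i) ⬝ᵥ (fun l => Vhat l j) = if i = j then 1 else 0 := by
    intro i j
    have := congrFun (congrFun hVh1 i) j
    rw [Matrix.mul_apply, Matrix.one_apply] at this
    simpa [dotProduct, Matrix.transpose_apply] using this
  have hVunit : ∀ i : Fin d, l2enorm (fun l => V l i) = 1 := by
    intro i
    have h := hVdot i i
    simp only [if_true, eq_self_iff_true] at h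
    unfold l2enorm
    rw [show ∑ l, (V l i) ^ 2 = (fun l => V l i) ⬝ᵥ (fun l => V l i) by
      simp [dotProduct, sq]]
    rw [h, Real.sqrt_one]
  have hVhunit : ∀ i : Fin d, l2enorm (fun l => Vhat l i) = 1 := by
    intro i
    have h := hVhdot i i
    simp only [if_true, eq_self_iff_true] at h
    unfold l2enorm
    rw [show ∑ l, (Vhat l i) ^ 2 = (fun l => Vhat l i) ⬝ᵥ (fun l => Vhat l i) by
      simp [dotProduct, sq]]
    rw [h, Real.sqrt_one]
  -- coefficient bound
  set c : Fin d → ℝ := fun j => (σ j)⁻¹ * ((fun l => U l j) ⬝ᵥ b) with hc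
  have hcb : ∀ j : Fin d, (j : ℕ) < k → |c j| ≤ σ j ^ (p - 1) := by
    intro j hj
    have hσj : 0 < σ j := (hrank j).mpr hj
    rw [hc]
    simp only
    rw [abs_mul, abs_inv, abs_of_pos hσj]
    have h1 : (σ j)⁻¹ * |(fun l => U l j) ⬝ᵥ b| ≤ (σ j)⁻¹ * σ j ^ p :=
      mul_le_mul_of_nonneg_left (hPicard₁ j hj) (inv_nonneg.mpr hσj.le)
    refine h1.trans_eq ?_
    rw [Real.rpow_sub hσj, Real.rpow_one, inv_mul_eq_div]
  -- key per-coordinate bound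
  have key : ∀ i : Fin d, r ≤ (i : ℕ) → |(fun l => Vhat l i) ⬝ᵥ wstar| ≤ σr + ε := by
    intro i hi
    have hexp : (fun l => Vhat l i) ⬝ᵥ wstar
        = ∑ j ∈ t, c j * ((fun l => Vhat l i) ⬝ᵥ (fun l => V l j)) := by
      rw [hwstar, dot_sum']
      exact Finset.sum_congr rfl fun j _ => by
        rw [dotProduct_smul, smul_eq_mul]
    have habs : |(fun l => Vhat l i) ⬝ᵥ wstar|
        ≤ ∑ j ∈ t, |c j| * |(fun l => Vhat l i) ⬝ᵥ (fun l => V l j)| := by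
      rw [hexp]
      refine (Finset.abs_sum_le_sum_abs _ _).trans ?_
      exact Finset.sum_le_sum fun j _ => le_of_eq (abs_mul _ _)
    -- bound A
    have hA1 : ∑ j ∈ t, |c j| * |(fun l => Vhat l i) ⬝ᵥ (fun l => V l j)|
        ≤ (k : ℝ) * σ i0 ^ (p - 1) := by
      have step : ∀ j ∈ t, |c j| * |(fun l => Vhat l i) ⬝ᵥ (fun l => V l j)|
          ≤ σ i0 ^ (p - 1) := by
        intro j hj
        have hjk : (j : ℕ) < k := by simpa [ht] using hj
        have hd1 : |(fun l => Vhat l i) ⬝ᵥ (fun l => V l j)| ≤ 1 := by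
          have := abs_dot_le (fun l => Vhat l i) (fun l => V l j)
          rwa [hVhunit, hVunit, one_mul] at this
        calc |c j| * |(fun l => Vhat l i) ⬝ᵥ (fun l => V l j)|
            ≤ σ j ^ (p - 1) * 1 :=
              mul_le_mul (hcb j hjk) hd1 (abs_nonneg _) (Real.rpow_nonneg (hσnonneg j) _)
          _ = σ j ^ (p - 1) := mul_one _
          _ ≤ σ i0 ^ (p - 1) :=
              Real.rpow_le_rpow (hσnonneg j) (hσanti i0 j (by simp [hi0, Fin.le_def])) hpm
      calc ∑ j ∈ t, |c j| * |(fun l => Vhat l i) ⬝ᵥ (fun l => V l j)|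
          ≤ ∑ _j ∈ t, σ i0 ^ (p - 1) := Finset.sum_le_sum step
        _ = (t.card : ℝ) * σ i0 ^ (p - 1) := by rw [Finset.sum_const, nsmul_eq_mul]
        _ = (k : ℝ) * σ i0 ^ (p - 1) := by rw [ht, card_filter_lt' d k hkd]
    -- bound B
    have hB1 : ∑ j ∈ t, |c j| * |(fun l => Vhat l i) ⬝ᵥ (fun l => V l j)|
        ≤ (∑ j ∈ t, l2enorm ((σ j ^ (p - 1)) • (fun l => V l j) -
              (σhat j ^ (p - 1)) • (fun l => Vhat l j))) + σhat ir ^ (p - 1) := by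
      have step : ∀ j ∈ t, |c j| * |(fun l => Vhat l i) ⬝ᵥ (fun l => V l j)|
          ≤ l2enorm ((σ j ^ (p - 1)) • (fun l => V l j) -
              (σhat j ^ (p - 1)) • (fun l => Vhat l j))
            + (if j = i then σhat j ^ (p - 1) else 0) := by
        intro j hj
        have hjk : (j : ℕ) < k := by simpa [ht] using hj
        have h1 : |c j| * |(fun l => Vhat l i) ⬝ᵥ (fun l => V l j)|
            ≤ σ j ^ (p - 1) * |(fun l => Vhat l i) ⬝ᵥ (fun l => V l j)| :=
          mul_le_mul_of_nonneg_right (hcb j hjk) (abs_nonneg _)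
        have h2 : σ j ^ (p - 1) * |(fun l => Vhat l i) ⬝ᵥ (fun l => V l j)|
            = |(fun l => Vhat l i) ⬝ᵥ ((σ j ^ (p - 1)) • (fun l => V l j))| := by
          rw [dotProduct_smul, smul_eq_mul, abs_mul,
            abs_of_nonneg (Real.rpow_nonneg (hσnonneg j) _)]
        have h3 : (σ j ^ (p - 1)) • (fun l => V l j)
            = ((σ j ^ (p - 1)) • (fun l => V l j) -
                (σhat j ^ (p - 1)) • (fun l => Vhat l j))
              + (σhat j ^ (p - 1)) • (fun l => Vhat l j) := by
          rw [sub_add_cancel]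
        have h4 : (fun l => Vhat l i) ⬝ᵥ ((σ j ^ (p - 1)) • (fun l => V l j))
            = (fun l => Vhat l i) ⬝ᵥ ((σ j ^ (p - 1)) • (fun l => V l j) -
                (σhat j ^ (p - 1)) • (fun l => Vhat l j))
              + (fun l => Vhat l i) ⬝ᵥ ((σhat j ^ (p - 1)) • (fun l => Vhat l j)) := by
          rw [← dotProduct_add, sub_add_cancel]
        refine (h1.trans_eq h2).trans ?_
        rw [h4]
        refine (abs_add_le _ _).trans (add_le_add ?_ ?_)
        · have := abs_dot_le (fun l => Vhat l i)
            ((σ j ^ (p - 1)) • (fun l => V l j) - (σhat j ^ (p - 1)) • (fun l => Vhat l j))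
          rwa [hVhunit, one_mul] at this
        · rw [dotProduct_smul, smul_eq_mul, abs_mul,
            abs_of_nonneg (Real.rpow_nonneg (hσhatnonneg j) _), hVhdot]
          by_cases hij : j = i
          · simp [hij]
          · rw [if_neg (fun h => hij h.symm)]
            simp [hij]
      calc ∑ j ∈ t, |c j| * |(fun l => Vhat l i) ⬝ᵥ (fun l => V l j)|
          ≤ ∑ j ∈ t, (l2enorm ((σ j ^ (p - 1)) • (fun l => V l j) -
              (σhat j ^ (p - 1)) • (fun l => Vhat l j))
            + (if j = i then σhat j ^ (p - 1) else 0)) := Finset.sum_le_sum step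
        _ = (∑ j ∈ t, l2enorm ((σ j ^ (p - 1)) • (fun l => V l j) -
              (σhat j ^ (p - 1)) • (fun l => Vhat l j)))
            + ∑ j ∈ t, (if j = i then σhat j ^ (p - 1) else 0) :=
            Finset.sum_add_distrib
        _ ≤ _ := by
            refine add_le_add_right ?_ _
            rw [Finset.sum_ite_eq' t i (fun j => σhat j ^ (p - 1))]
            have hle : σhat i ^ (p - 1) ≤ σhat ir ^ (p - 1) :=
              Real.rpow_le_rpow (hσhatnonneg i)
                (hσhatanti ir i (by simp [hir, Fin.le_def]; omega)) hpm
            by_cases hit : i ∈ t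
            · simpa [hit] using hle
            · simp [hit, Real.rpow_nonneg (hσhatnonneg ir)]
    have hσrnn : 0 ≤ σr := Real.rpow_nonneg (hσnonneg ir) _
    rw [hε]
    rcases le_total ((k : ℝ) * σ i0 ^ (p - 1))
        ((∑ j ∈ t, l2enorm ((σ j ^ (p - 1)) • (fun l => V l j) -
            (σhat j ^ (p - 1)) • (fun l => Vhat l j))) +
          σhat ir ^ (p - 1) - σr) with h | h
    · rw [min_eq_left h]
      have := habs.trans hA1
      linarith
    · rw [min_eq_right h]
      have := habs.trans hB1
      linarith
  -- conclusion
  calc l2enorm (∑ i ∈ s, ((fun l => Vhat l i) ⬝ᵥ wstar) • (fun l => Vhat l i))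
      ≤ ∑ i ∈ s, l2enorm (((fun l => Vhat l i) ⬝ᵥ wstar) • (fun l => Vhat l i)) :=
        l2enorm_sum_le s _
    _ = ∑ i ∈ s, |(fun l => Vhat l i) ⬝ᵥ wstar| := by
        refine Finset.sum_congr rfl fun i _ => ?_
        rw [l2enorm_smul, hVhunit, mul_one]
    _ ≤ ∑ _i ∈ s, (σr + ε) := by
        refine Finset.sum_le_sum fun i hi => key i ?_
        simpa [hs] using hi
    _ = (s.card : ℝ) * (σr + ε) := by rw [Finset.sum_const, nsmul_eq_mul]
    _ = ((d : ℝ) - (r : ℝ)) * (σr + ε) := by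
        rw [hs, card_filter_ge' d r hrd, Nat.cast_sub hrd]
    _ = ((d : ℝ) - (r : ℝ)) * σr + ((d : ℝ) - (r : ℝ)) * ε := by ring
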